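/- Quantification does not distribute over union in the nondeterministic query semantics: there exist a pattern P, queries Q₁, Q₂, and a database F such that the sets of possible results of (from P . (Q₁ ⊕ Q₂)) and of (from P . Q₁) ⊕ (from P . Q₂) on F differ. Concretely, with facts a, b(1), b(2), pattern P = [a ∘ b(x)]?, Q₁ = b(x), Q₂ = c(x), and F = a ∘ b(1) ∘ b(2): the first query's possible results are exactly {b(i)∘c(i) : i ∈ {1,2}} while the second's are exactly {b(i)∘c(j) : i,j ∈ {1,2}}. -/
import Mathlib


namespace Stmt16

/-- Facts `a`, `b(n)`, `c(n)` of the counterexample. -/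
inductive Fact where
  | a : Fact
  | b : ℕ → Fact
  | c : ℕ → Fact
deriving DecidableEq

/-- Possible results of `from [a ∘ b(x)]? . Q` on database `F`: the pattern
requires the fact `a` together with some fact `b(i)` simultaneously and
consumes both from the iterator state; since `F` contains a single `a`-fact
only one iteration is possible, and the result is the body's result for the
matched `i`. -/
def fromRes (F : Multiset Fact) (body : ℕ → Multiset Fact) : Set (Multiset Fact) :=
  { R | ∃ i : ℕ, Fact.a ∈ F ∧ Fact.b i ∈ F ∧ R = body i }

/-- Possible results of a union `Q ⊕ Q'`: multiset unions of a possible result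
of each argument, evaluated independently against the same database. -/
def unionRes (S T : Set (Multiset Fact)) : Set (Multiset Fact) :=
  { R | ∃ r ∈ S, ∃ s ∈ T, R = r + s }

/-- quantification does not distribute over union.  With
`F = a ∘ b(1) ∘ b(2)`, `P = [a ∘ b(x)]?`, `Q₁ = b(x)`, `Q₂ = c(x)`, the
possible results of `from P . (Q₁ ⊕ Q₂)` are exactly the `b(i) ∘ c(i)` with
`i ∈ {1,2}`, while those of `(from P . Q₁) ⊕ (from P . Q₂)` are exactly the
`b(i) ∘ c(j)` with `i, j ∈ {1,2}`; in particular the two result sets differ. -/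
theorem from_does_not_distribute_over_union :
    (fromRes {Fact.a, Fact.b 1, Fact.b 2} (fun i => {Fact.b i, Fact.c i}) =
      { R | ∃ i : ℕ, (i = 1 ∨ i = 2) ∧ R = ({Fact.b i, Fact.c i} : Multiset Fact) }) ∧
    (unionRes (fromRes {Fact.a, Fact.b 1, Fact.b 2} (fun i => {Fact.b i}))
        (fromRes {Fact.a, Fact.b 1, Fact.b 2} (fun i => {Fact.c i})) =
      { R | ∃ i j : ℕ, (i = 1 ∨ i = 2) ∧ (j = 1 ∨ j = 2) ∧
          R = ({Fact.b i, Fact.c j} : Multiset Fact) }) ∧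
    fromRes {Fact.a, Fact.b 1, Fact.b 2} (fun i => {Fact.b i, Fact.c i}) ≠
      unionRes (fromRes {Fact.a, Fact.b 1, Fact.b 2} (fun i => {Fact.b i}))
        (fromRes {Fact.a, Fact.b 1, Fact.b 2} (fun i => {Fact.c i})) := by
  have h1 : fromRes {Fact.a, Fact.b 1, Fact.b 2} (fun i => {Fact.b i, Fact.c i}) =
      { R | ∃ i : ℕ, (i = 1 ∨ i = 2) ∧ R = ({Fact.b i, Fact.c i} : Multiset Fact) } := by
    ext R; simp [fromRes]
  have h2 : unionRes (fromRes {Fact.a, Fact.b 1, Fact.b 2} (fun i => {Fact.b i}))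
        (fromRes {Fact.a, Fact.b 1, Fact.b 2} (fun i => {Fact.c i})) =
      { R | ∃ i j : ℕ, (i = 1 ∨ i = 2) ∧ (j = 1 ∨ j = 2) ∧
          R = ({Fact.b i, Fact.c j} : Multiset Fact) } := by
    ext R
    simp only [unionRes, fromRes, Set.mem_setOf_eq]
    constructor
    · rintro ⟨r, ⟨i, -, hi, rfl⟩, s, ⟨j, -, hj, rfl⟩, rfl⟩
      exact ⟨i, j, by simpa using hi, by simpa using hj, rfl⟩
    · rintro ⟨i, j, hi, hj, rfl⟩
      exact ⟨{Fact.b i}, ⟨i, by simp, by simp [hi], rfl⟩,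
        {Fact.c j}, ⟨j, by simp, by simp [hj], rfl⟩, rfl⟩
  refine ⟨h1, h2, ?_⟩
  rw [h1, h2]
  intro h
  have : ({Fact.b 1, Fact.c 2} : Multiset Fact) ∈
      { R | ∃ i : ℕ, (i = 1 ∨ i = 2) ∧ R = ({Fact.b i, Fact.c i} : Multiset Fact) } := by
    rw [h]; exact ⟨1, 2, Or.inl rfl, Or.inr rfl, rfl⟩
  obtain ⟨i, hi, he⟩ := this
  rcases hi with rfl | rfl <;> simp_all [Multiset.insert_eq_cons, Multiset.cons_eq_cons]

end Stmt16
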